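/- arXiv:1904.01634 — 5 statements merged into one kernel-verified Lean document; each statement's English description precedes it below -/
import Mathlib

section
/- Suppose matrices Φx and Φu satisfy (I - ZA)Φx - ZB·Φu = I, and suppose Φx is invertible. Define K = Φu·Φx⁻¹. Then (I - Z(A + BK)) = Φx⁻¹, and consequently (I - Z(A+BK))⁻¹ = Φx and K·(I - Z(A+BK))⁻¹ = Φu. -/
/-! Right-multiplying the affine constraint `(I - ZA)Φx - ZBΦu = I` by `Φx⁻¹` turns it into
`I - Z(A + BΦuΦx⁻¹) = Φx⁻¹`; the other two identities then follow by inverting `Φx⁻¹`. -/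

namespace Matrix

variable {m k R : Type*} [Fintype m] [DecidableEq m] [Fintype k] [CommRing R]

theorem one_sub_mul_add_mul_mul_nonsing_inv_eq {Z A Φx : Matrix m m R} {B : Matrix m k R}
    {Φu : Matrix k m R} (hΦx : IsUnit Φx.det) (h : (1 - Z * A) * Φx - Z * B * Φu = 1) :
    1 - Z * (A + B * (Φu * Φx⁻¹)) = Φx⁻¹ :=
  calc 1 - Z * (A + B * (Φu * Φx⁻¹))
      = (1 - Z * A) * Φx * Φx⁻¹ - Z * B * Φu * Φx⁻¹ := by
        rw [mul_nonsing_inv_cancel_right Φx (1 - Z * A) hΦx, Matrix.mul_add, sub_add_eq_sub_sub]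
        simp only [Matrix.mul_assoc]
    _ = ((1 - Z * A) * Φx - Z * B * Φu) * Φx⁻¹ := by rw [Matrix.sub_mul ((1 - Z * A) * Φx)]
    _ = Φx⁻¹ := by rw [h, one_mul]

end Matrix

/-- Sufficiency direction of the finite-horizon SLS parameterization: if
`(I - ZA)Φx - ZBΦu = I` and `Φx` is invertible, then `K = Φu Φx⁻¹` satisfies
`I - Z(A+BK) = Φx⁻¹`, hence `(I - Z(A+BK))⁻¹ = Φx` and `K (I - Z(A+BK))⁻¹ = Φu`. -/
theorem stmt_2 {n p : ℕ} (Z A Φx : Matrix (Fin n) (Fin n) ℝ) (B : Matrix (Fin n) (Fin p) ℝ)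
    (Φu : Matrix (Fin p) (Fin n) ℝ) (hΦx : IsUnit Φx)
    (h : (1 - Z * A) * Φx - Z * B * Φu = 1) :
    (1 - Z * (A + B * (Φu * Φx⁻¹))) = Φx⁻¹ ∧
    (1 - Z * (A + B * (Φu * Φx⁻¹)))⁻¹ = Φx ∧
    (Φu * Φx⁻¹) * (1 - Z * (A + B * (Φu * Φx⁻¹)))⁻¹ = Φu := by
  have hdet : IsUnit Φx.det := (Matrix.isUnit_iff_isUnit_det Φx).mp hΦx
  have hcl : 1 - Z * (A + B * (Φu * Φx⁻¹)) = Φx⁻¹ :=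
    Matrix.one_sub_mul_add_mul_mul_nonsing_inv_eq hdet h
  have hinv : (1 - Z * (A + B * (Φu * Φx⁻¹)))⁻¹ = Φx := by
    rw [hcl, Matrix.nonsing_inv_nonsing_inv _ hdet]
  exact ⟨hcl, hinv, by rw [hinv]; exact Matrix.nonsing_inv_mul_cancel_right Φx Φu hdet⟩
end

section
/- Suppose matrices Φx, Φu, Δ satisfy (I - ZA)Φx - ZB·Φu = I + Δ, where Φx and I + Δ are invertible. Define K = Φu·Φx⁻¹. Then (I - Z(A+BK))⁻¹ = Φx·(I+Δ)⁻¹ and K·(I - Z(A+BK))⁻¹ = Φu·(I+Δ)⁻¹. -/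
namespace Matrix

variable {m n R : Type*} [Fintype m] [Fintype n] [DecidableEq n] [CommRing R]

theorem closedLoop_mul_eq_of_isUnit (Z A Φx : Matrix n n R) (B : Matrix n m R)
    (Φu : Matrix m n R) (hΦx : IsUnit Φx) :
    (1 - Z * (A + B * (Φu * Φx⁻¹))) * Φx = (1 - Z * A) * Φx - Z * B * Φu := by
  have hdet : IsUnit Φx.det := (isUnit_iff_isUnit_det Φx).mp hΦx
  simp only [Matrix.sub_mul, Matrix.mul_add, Matrix.add_mul, Matrix.mul_assoc,
    nonsing_inv_mul Φx hdet, Matrix.mul_one]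
  abel

theorem inv_eq_mul_inv_of_mul_eq {M X D : Matrix n n R} (hX : IsUnit X) (h : M * X = D) :
    M⁻¹ = X * D⁻¹ := by
  rw [← h, mul_inv_rev, mul_nonsing_inv_cancel_left _ _ ((isUnit_iff_isUnit_det X).mp hX)]

end Matrix

theorem stmt_5_general {n p : ℕ} (Z A Φx Δ : Matrix (Fin n) (Fin n) ℝ) (B : Matrix (Fin n) (Fin p) ℝ)
    (Φu : Matrix (Fin p) (Fin n) ℝ) (hΦx : IsUnit Φx)
    (h : (1 - Z * A) * Φx - Z * B * Φu = 1 + Δ) :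
    (1 - Z * (A + B * (Φu * Φx⁻¹)))⁻¹ = Φx * (1 + Δ)⁻¹ ∧
    (Φu * Φx⁻¹) * (1 - Z * (A + B * (Φu * Φx⁻¹)))⁻¹ = Φu * (1 + Δ)⁻¹ := by
  have hresponse : (1 - Z * (A + B * (Φu * Φx⁻¹)))⁻¹ = Φx * (1 + Δ)⁻¹ :=
    Matrix.inv_eq_mul_inv_of_mul_eq hΦx
      ((Matrix.closedLoop_mul_eq_of_isUnit Z A Φx B Φu hΦx).trans h)
  refine ⟨hresponse, ?_⟩
  rw [hresponse, Matrix.mul_assoc,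
    Matrix.nonsing_inv_mul_cancel_left _ _ ((Matrix.isUnit_iff_isUnit_det Φx).mp hΦx)]

/-- Robust finite-horizon SLS: if `(I - ZA)Φx - ZBΦu = I + Δ` with `Φx` and `I + Δ`
invertible, then `K = Φu Φx⁻¹` yields `(I - Z(A+BK))⁻¹ = Φx (I+Δ)⁻¹` and
`K (I - Z(A+BK))⁻¹ = Φu (I+Δ)⁻¹`. -/
theorem stmt_5 {n p : ℕ} (Z A Φx Δ : Matrix (Fin n) (Fin n) ℝ) (B : Matrix (Fin n) (Fin p) ℝ)
    (Φu : Matrix (Fin p) (Fin n) ℝ) (hΦx : IsUnit Φx) (hΔ : IsUnit (1 + Δ))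
    (h : (1 - Z * A) * Φx - Z * B * Φu = 1 + Δ) :
    (1 - Z * (A + B * (Φu * Φx⁻¹)))⁻¹ = Φx * (1 + Δ)⁻¹ ∧
    (Φu * Φx⁻¹) * (1 - Z * (A + B * (Φu * Φx⁻¹)))⁻¹ = Φu * (1 + Δ)⁻¹ :=
  stmt_5_general Z A Φx Δ B Φu hΦx h
end

section
/- Let ΔA, ΔB, Φx, Φu be matrices with operator norms ‖ΔA‖ ≤ εA and ‖ΔB‖ ≤ εB. Then ‖ΔA·Φx + ΔB·Φu‖ ≤ √2 · ‖[εA·Φx; εB·Φu]‖, where [εA·Φx; εB·Φu] denotes the vertical block concatenation. -/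
/-!
For a vector `x`, write `u = Φx x` and `v = Φu x`. Then
`‖(ΔA Φx + ΔB Φu) x‖ ≤ εA ‖u‖ + εB ‖v‖ ≤ √2 · √(εA² ‖u‖² + εB² ‖v‖²)`,
and the last square root is exactly `‖[εA Φx; εB Φu] x‖`, since stacking rows adds squared
Euclidean norms.
-/

open scoped Matrix.Norms.L2Operator
open Matrix

theorem add_le_sqrt_two_mul_sqrt_sq_add_sq (a b : ℝ) : a + b ≤ √2 * √(a ^ 2 + b ^ 2) := by
  rw [← Real.sqrt_mul zero_le_two]
  exact Real.le_sqrt_of_sq_le (by nlinarith [sq_nonneg (a - b)])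

namespace Matrix

variable {𝕜 : Type*} [RCLike 𝕜] {k l m n : Type*} [Fintype k] [Fintype l] [Fintype m] [Fintype n]

theorem _root_.EuclideanSpace.norm_sq_symm_equiv_sumElim (u : m → 𝕜) (v : n → 𝕜) :
    ‖(EuclideanSpace.equiv (m ⊕ n) 𝕜).symm (Sum.elim u v)‖ ^ 2 =
      ‖(EuclideanSpace.equiv m 𝕜).symm u‖ ^ 2 + ‖(EuclideanSpace.equiv n 𝕜).symm v‖ ^ 2 := by
  simp only [EuclideanSpace.norm_sq_eq, Fintype.sum_sum_type]
  rfl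

theorem l2_norm_sq_fromRows_mulVec (A : Matrix m l 𝕜) (B : Matrix n l 𝕜) (x : l → 𝕜) :
    ‖(EuclideanSpace.equiv (m ⊕ n) 𝕜).symm (fromRows A B *ᵥ x)‖ ^ 2 =
      ‖(EuclideanSpace.equiv m 𝕜).symm (A *ᵥ x)‖ ^ 2 +
        ‖(EuclideanSpace.equiv n 𝕜).symm (B *ᵥ x)‖ ^ 2 := by
  rw [fromRows_mulVec, EuclideanSpace.norm_sq_symm_equiv_sumElim]

theorem l2_opNorm_le_of_mulVec_le [DecidableEq n] {A : Matrix m n 𝕜} {C : ℝ} (hC : 0 ≤ C)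
    (h : ∀ x : EuclideanSpace 𝕜 n, ‖(EuclideanSpace.equiv m 𝕜).symm (A *ᵥ x)‖ ≤ C * ‖x‖) :
    ‖A‖ ≤ C :=
  ContinuousLinearMap.opNorm_le_bound _ hC h

theorem l2_norm_smul_mulVec (c : ℝ) (A : Matrix m n 𝕜) (x : n → 𝕜) :
    ‖(EuclideanSpace.equiv m 𝕜).symm ((c • A) *ᵥ x)‖ =
      |c| * ‖(EuclideanSpace.equiv m 𝕜).symm (A *ᵥ x)‖ := by
  rw [smul_mulVec, RCLike.real_smul_eq_coe_smul (K := 𝕜), map_smul, norm_smul, RCLike.norm_ofReal]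

theorem l2_norm_mul_add_mul_mulVec_le [DecidableEq l] [DecidableEq n]
    {A : Matrix m l 𝕜} {B : Matrix m n 𝕜} {εA εB : ℝ} (hA : ‖A‖ ≤ εA) (hB : ‖B‖ ≤ εB)
    (X : Matrix l k 𝕜) (Y : Matrix n k 𝕜) (x : EuclideanSpace 𝕜 k) :
    ‖(EuclideanSpace.equiv m 𝕜).symm ((A * X + B * Y) *ᵥ x)‖ ≤
      √2 * ‖(EuclideanSpace.equiv (l ⊕ n) 𝕜).symm (fromRows (εA • X) (εB • Y) *ᵥ x)‖ := by
  set u := (EuclideanSpace.equiv l 𝕜).symm (X *ᵥ x)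
  set v := (EuclideanSpace.equiv n 𝕜).symm (Y *ᵥ x)
  have hεA : 0 ≤ εA := (norm_nonneg A).trans hA
  have hεB : 0 ≤ εB := (norm_nonneg B).trans hB
  calc ‖(EuclideanSpace.equiv m 𝕜).symm ((A * X + B * Y) *ᵥ x)‖
      ≤ ‖(EuclideanSpace.equiv m 𝕜).symm (A *ᵥ u)‖ + ‖(EuclideanSpace.equiv m 𝕜).symm (B *ᵥ v)‖ := by
        rw [add_mulVec, ← mulVec_mulVec, ← mulVec_mulVec, map_add]
        exact norm_add_le _ _
    _ ≤ εA * ‖u‖ + εB * ‖v‖ := by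
        gcongr
        · exact (l2_opNorm_mulVec A u).trans (by gcongr)
        · exact (l2_opNorm_mulVec B v).trans (by gcongr)
    _ ≤ √2 * √((εA * ‖u‖) ^ 2 + (εB * ‖v‖) ^ 2) := add_le_sqrt_two_mul_sqrt_sq_add_sq _ _
    _ = √2 * ‖(EuclideanSpace.equiv (l ⊕ n) 𝕜).symm (fromRows (εA • X) (εB • Y) *ᵥ x)‖ := by
        rw [← Real.sqrt_sq (norm_nonneg ((EuclideanSpace.equiv (l ⊕ n) 𝕜).symm _)),
          l2_norm_sq_fromRows_mulVec, l2_norm_smul_mulVec, l2_norm_smul_mulVec,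
          abs_of_nonneg hεA, abs_of_nonneg hεB]

end Matrix

/-- If `‖ΔA‖ ≤ εA` and `‖ΔB‖ ≤ εB` (operator norms), then
`‖ΔA Φx + ΔB Φu‖ ≤ √2 ‖[εA Φx; εB Φu]‖` where `[·;·]` is vertical block concatenation. -/
theorem stmt_7 {m n p q : ℕ} (ΔA : Matrix (Fin m) (Fin n) ℝ) (ΔB : Matrix (Fin m) (Fin p) ℝ)
    (Φx : Matrix (Fin n) (Fin q) ℝ) (Φu : Matrix (Fin p) (Fin q) ℝ) (εA εB : ℝ)
    (hA : ‖ΔA‖ ≤ εA) (hB : ‖ΔB‖ ≤ εB) :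
    ‖ΔA * Φx + ΔB * Φu‖ ≤ Real.sqrt 2 * ‖Matrix.fromRows (εA • Φx) (εB • Φu)‖ := by
  refine l2_opNorm_le_of_mulVec_le (by positivity) fun x ↦ ?_
  calc _ ≤ √2 * ‖(EuclideanSpace.equiv _ ℝ).symm (fromRows (εA • Φx) (εB • Φu) *ᵥ x)‖ :=
        l2_norm_mul_add_mul_mulVec_le hA hB Φx Φu x
    _ ≤ √2 * (‖fromRows (εA • Φx) (εB • Φu)‖ * ‖x‖) := by gcongr; exact l2_opNorm_mulVec _ x
    _ = √2 * ‖fromRows (εA • Φx) (εB • Φu)‖ * ‖x‖ := (mul_assoc _ _ _).symm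
end

section
/- Sparsity constraints on strongly connected plants are not quadratically invariant: let P be an n×n matrix all of whose entries are nonzero (n ≥ 2), and let C be the subspace of n×n matrices whose (i,j) entry is zero for some fixed pair i ≠ j. Then C is not quadratically invariant with respect to P, i.e., there exists K ∈ C with K·P·K ∉ C. -/
theorem stmt_16_general {n : ℕ} (P : Matrix (Fin n) (Fin n) ℝ)
    (hP : ∀ i j, P i j ≠ 0) (i j : Fin n) (hij : i ≠ j) :
    ∃ K : Matrix (Fin n) (Fin n) ℝ, K i j = 0 ∧ (K * P * K) i j ≠ 0 :=
  ⟨1, Matrix.one_apply_ne hij, by simpa only [Matrix.one_mul, Matrix.mul_one] using hP i j⟩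

/-- Sparsity constraints on strongly connected plants are not quadratically invariant:
if every entry of `P` is nonzero and `i ≠ j`, then there is `K` with `K i j = 0` but
`(KPK) i j ≠ 0`. -/
theorem stmt_16 {n : ℕ} (hn : 2 ≤ n) (P : Matrix (Fin n) (Fin n) ℝ)
    (hP : ∀ i j, P i j ≠ 0) (i j : Fin n) (hij : i ≠ j) :
    ∃ K : Matrix (Fin n) (Fin n) ℝ, K i j = 0 ∧ (K * P * K) i j ≠ 0 :=
  stmt_16_general P hP i j hij
end

section
/- Under the conditions of the robust finite-horizon SLS theorem, the worst-case objective admits the bound: if (I - ZA)Φx - ZB·Φu = I + Δ with ‖Δ‖ < 1 (operator norm) and M is any matrix, then ‖M·[Φx; Φu]·(I+Δ)⁻¹‖_F ≤ ‖M·[Φx; Φu]‖_F · (1/(1 - ‖Δ‖)). -/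
/-!
Row by row, `‖v Y‖₂ ≤ ‖v‖₂ ‖Y‖`, so summing squares gives `‖X Y‖_F ≤ ‖X‖_F ‖Y‖`. Applied with
`X = M [Φx; Φu]` and `Y = (I + Δ)⁻¹`, it remains to bound `‖(I + Δ)⁻¹‖` by the Neumann series
`∑ ‖Δ‖ⁱ = 1 / (1 - ‖Δ‖)`.
-/

open scoped Matrix.Norms.L2Operator

noncomputable def frobNorm {m n : Type*} [Fintype m] [Fintype n] (M : Matrix m n ℝ) : ℝ :=
  Real.sqrt (∑ i, ∑ j, (M i j) ^ 2)

theorem norm_inverse_one_add_le {R : Type*} [NormedRing R] [HasSummableGeomSeries R]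
    (h₁ : ‖(1 : R)‖ ≤ 1) {x : R} (hx : ‖x‖ < 1) : ‖Ring.inverse (1 + x)‖ ≤ (1 - ‖x‖)⁻¹ := by
  have hx' : ‖-x‖ < 1 := by rwa [norm_neg]
  have := tsum_geometric_le_of_norm_lt_one (-x) hx'
  rw [geom_series_eq_inverse (-x) hx', sub_neg_eq_add, norm_neg] at this
  linarith

namespace Matrix

variable {𝕜 m n : Type*} [RCLike 𝕜] [Fintype m] [Fintype n]

theorem l2_opNorm_one_le [DecidableEq n] : ‖(1 : Matrix n n 𝕜)‖ ≤ 1 := by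
  rw [cstar_norm_def, map_one]
  exact ContinuousLinearMap.norm_id_le

theorem l2_opNorm_inv_one_add_le [DecidableEq n] {Δ : Matrix n n 𝕜} (hΔ : ‖Δ‖ < 1) :
    ‖(1 + Δ)⁻¹‖ ≤ (1 - ‖Δ‖)⁻¹ := by
  rw [nonsing_inv_eq_ringInverse]
  exact norm_inverse_one_add_le l2_opNorm_one_le hΔ

theorem l2_norm_vecMul_le [DecidableEq n] (v : m → ℝ) (Y : Matrix m n ℝ) :
    ‖WithLp.toLp 2 (v ᵥ* Y)‖ ≤ ‖WithLp.toLp 2 v‖ * ‖Y‖ := by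
  classical
  have := l2_opNorm_mulVec Yᵀ (WithLp.toLp 2 v)
  rw [← conjTranspose_eq_transpose_of_trivial, l2_opNorm_conjTranspose,
    conjTranspose_eq_transpose_of_trivial, mulVec_transpose] at this
  simpa [mul_comm] using this

end Matrix

section frobNorm

variable {m n k : Type*} [Fintype m] [Fintype n] [Fintype k]

theorem frobNorm_eq_sqrt_sum_norm_row_sq (X : Matrix m n ℝ) :
    frobNorm X = √(∑ i, ‖WithLp.toLp 2 (X i)‖ ^ 2) := by
  simp only [frobNorm, EuclideanSpace.real_norm_sq_eq]

theorem frobNorm_mul_le [DecidableEq k] (X : Matrix m n ℝ) (Y : Matrix n k ℝ) :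
    frobNorm (X * Y) ≤ frobNorm X * ‖Y‖ := by
  rw [frobNorm_eq_sqrt_sum_norm_row_sq, frobNorm_eq_sqrt_sum_norm_row_sq,
    ← Real.sqrt_sq (norm_nonneg Y), ← Real.sqrt_mul (by positivity), Finset.sum_mul]
  gcongr with i
  rw [← mul_pow]
  exact pow_le_pow_left₀ (norm_nonneg _) (Matrix.l2_norm_vecMul_le (X i) Y) 2

end frobNorm

theorem stmt_18_general {n p r : ℕ} (Φx Δ : Matrix (Fin n) (Fin n) ℝ)
    (Φu : Matrix (Fin p) (Fin n) ℝ)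
    (M : Matrix (Fin r) (Fin n ⊕ Fin p) ℝ)
    (hΔ : ‖Δ‖ < 1) :
    frobNorm (M * (Matrix.fromRows Φx Φu * (1 + Δ)⁻¹))
      ≤ frobNorm (M * Matrix.fromRows Φx Φu) * (1 / (1 - ‖Δ‖)) := by
  rw [← Matrix.mul_assoc, one_div]
  calc frobNorm (M * Matrix.fromRows Φx Φu * (1 + Δ)⁻¹)
      ≤ frobNorm (M * Matrix.fromRows Φx Φu) * ‖(1 + Δ)⁻¹‖ := frobNorm_mul_le _ _
    _ ≤ frobNorm (M * Matrix.fromRows Φx Φu) * (1 - ‖Δ‖)⁻¹ := by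
      gcongr
      · exact Real.sqrt_nonneg _
      · exact Matrix.l2_opNorm_inv_one_add_le hΔ

/-- Robust SLS objective bound: if `(I - ZA)Φx - ZBΦu = I + Δ` with `‖Δ‖ < 1`
(operator norm), then for any `M`,
`‖M [Φx; Φu] (I+Δ)⁻¹‖_F ≤ ‖M [Φx; Φu]‖_F · 1/(1-‖Δ‖)`. -/
theorem stmt_18 {n p r : ℕ} (Z A Φx Δ : Matrix (Fin n) (Fin n) ℝ)
    (B : Matrix (Fin n) (Fin p) ℝ) (Φu : Matrix (Fin p) (Fin n) ℝ)
    (M : Matrix (Fin r) (Fin n ⊕ Fin p) ℝ)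
    (h : (1 - Z * A) * Φx - Z * B * Φu = 1 + Δ) (hΔ : ‖Δ‖ < 1) :
    frobNorm (M * (Matrix.fromRows Φx Φu * (1 + Δ)⁻¹))
      ≤ frobNorm (M * Matrix.fromRows Φx Φu) * (1 / (1 - ‖Δ‖)) :=
  stmt_18_general Φx Δ Φu M hΔ
end
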